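/- Let F ≤ S_d and let l be a legal labelling of the d-regular tree T_d (d ≥ 3). Then U^{(l)}(F) is a discrete subgroup of Aut(T_d) (in the topology of pointwise convergence on vertices) if and only if the action of F on {1,…,d} is free, i.e., only the identity of F fixes a point of {1,…,d}. -/

import Mathlib

def IsTreeAut {V : Type*} (T : SimpleGraph V) (g : Equiv.Perm V) : Prop :=
  ∀ u v : V, T.Adj (g u) (g v) ↔ T.Adj u v

structure LegalLabelling {V : Type*} (T : SimpleGraph V) (d : ℕ) where
  label : V → V → Fin d
  symm : ∀ u v : V, T.Adj u v → label u v = label v u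
  inj : ∀ ⦃x u w : V⦄, T.Adj x u → T.Adj x w → label x u = label x w → u = w
  surj : ∀ (x : V) (i : Fin d), ∃ w : V, T.Adj x w ∧ label x w = i

/-- Membership in the Burger–Mozes universal group U^{(l)}(F). -/
def InU {V : Type*} {d : ℕ} (T : SimpleGraph V) (l : LegalLabelling T d)
    (F : Subgroup (Equiv.Perm (Fin d))) (g : Equiv.Perm V) : Prop :=
  IsTreeAut T g ∧
    ∀ x : V, ∃ a ∈ F, ∀ w : V, T.Adj x w → l.label (g x) (g w) = a (l.label x w)

/-- The topology of pointwise convergence on vertices (vertices being discrete). -/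
def permTop (V : Type*) : TopologicalSpace (Equiv.Perm V) :=
  TopologicalSpace.induced (fun g : Equiv.Perm V => (g : V → V))
    (@Pi.topologicalSpace V (fun _ => V) (fun _ => ⊥))

/-!
Coordinatise the vertices of the tree by reduced words over `Fin d`: the labels along the path
from a root. If `F` acts freely, an element of `U(F)` fixing an edge has trivial local
permutation at both of its ends, and spreading this along the tree it is the identity; so the
stabiliser of an edge is trivial and `U(F)` is discrete. Conversely, if `1 ≠ a ∈ F` fixes a
label `i`, applying `a` to all letters after a fixed reduced prefix `p` ending in `i` is an
element of `U(F)` (since `a i = i`, the edge entering the twisted subtree is respected); it is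
nontrivial but fixes all vertices within distance `|p|` of the root, and `|p|` is arbitrary.
-/

open SimpleGraph

-- The image of the path from `u` to `v` is a path from `g u` to `g v`, hence is that edge.
theorem SimpleGraph.IsTree.isTreeAut_of_adj {V : Type*} {T : SimpleGraph V} (hT : T.IsTree)
    {g : Equiv.Perm V} (hg : ∀ u v, T.Adj u v → T.Adj (g u) (g v)) : IsTreeAut T g := by
  refine fun u v => ⟨fun hadj => ?_, hg u v⟩
  obtain ⟨p, hp, -⟩ := hT.existsUnique_path u v
  let f : T →g T := ⟨g, hg _ _⟩
  have hmap : p.map f = .cons hadj .nil :=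
    (hT.existsUnique_path (g u) (g v)).unique (hp.map g.injective)
      (.cons .nil (by simpa using hadj.ne))
  exact Walk.adj_of_length_eq_one (by simpa using congrArg Walk.length hmap)

theorem discreteTopology_subtype_permTop_iff {V : Type*} {P : Equiv.Perm V → Prop} :
    @DiscreteTopology {g // P g} (.induced Subtype.val (permTop V)) ↔
      ∀ g, P g → ∃ I : Set V, I.Finite ∧
        ∀ h, P h → (∀ v ∈ I, h v = g v) → h = g := by
  let _ : TopologicalSpace V := ⊥
  have : DiscreteTopology V := ⟨rfl⟩
  let _ := permTop V
  have hnhds (g : {g // P g}) :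
      (nhds g).HasBasis Set.Finite fun I => {h | ∀ v ∈ I, h.1 v = g.1 v} := by
    have hperm : nhds g.1 = Filter.comap (⇑) (nhds (g.1 : V → V)) := nhds_induced _ _
    rw [nhds_induced, hperm, nhds_pi, Filter.comap_comap]
    simp only [nhds_discrete]
    exact (Filter.hasBasis_pi_pure _).comap _
  simp only [discreteTopology_iff_singleton_mem_nhds, fun g => (hnhds g).mem_iff,
    Set.subset_singleton_iff, Subtype.forall, Subtype.ext_iff, Set.mem_ofPred_eq]

namespace LegalLabelling

variable {V : Type*} {T : SimpleGraph V} {d : ℕ} (l : LegalLabelling T d)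

noncomputable def nbr (v : V) (c : Fin d) : V :=
  (l.surj v c).choose

lemma adj_nbr (v : V) (c : Fin d) : T.Adj v (l.nbr v c) :=
  (l.surj v c).choose_spec.1

lemma label_nbr (v : V) (c : Fin d) : l.label v (l.nbr v c) = c :=
  (l.surj v c).choose_spec.2

lemma nbr_label {v w : V} (h : T.Adj v w) : l.nbr v (l.label v w) = w :=
  l.inj (l.adj_nbr v _) h (l.label_nbr v _)

noncomputable def follow (v : V) (w : List (Fin d)) : V :=
  w.foldl l.nbr v

@[simp] lemma follow_nil (v : V) : l.follow v [] = v := rfl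

lemma follow_append_singleton (v : V) (w : List (Fin d)) (c : Fin d) :
    l.follow v (w ++ [c]) = l.nbr (l.follow v w) c :=
  List.foldl_concat ..

def walkLabels : {u v : V} → T.Walk u v → List (Fin d)
  | _, _, .nil => []
  | u, _, .cons (v := b) _ p => l.label u b :: walkLabels p

lemma follow_walkLabels {u v : V} (p : T.Walk u v) : l.follow u (l.walkLabels p) = v := by
  induction p with
  | nil => rfl
  | cons h p ih => rwa [walkLabels, follow, List.foldl_cons, l.nbr_label h]

lemma walkLabels_append {u v w : V} (p : T.Walk u v) (q : T.Walk v w) :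
    l.walkLabels (p.append q) = l.walkLabels p ++ l.walkLabels q := by
  induction p with
  | nil => rfl
  | cons h p ih => simp [walkLabels, ih]

lemma walkLabels_concat {u v w : V} (p : T.Walk u v) (h : T.Adj v w) :
    l.walkLabels (p.concat h) = l.walkLabels p ++ [l.label v w] := by
  rw [Walk.concat_eq_append, walkLabels_append]
  rfl

-- Equal consecutive labels would make the path backtrack, by injectivity of `l`.
lemma isChain_walkLabels : ∀ {u v : V} {p : T.Walk u v}, p.IsPath →
    (l.walkLabels p).IsChain (· ≠ ·)
  | _, _, .nil, _ => List.isChain_nil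
  | _, _, .cons _ .nil, _ => List.isChain_singleton _
  | u, _, .cons h (.cons h' p), hp => by
    refine List.isChain_cons_cons.2 ⟨fun heq => ?_, isChain_walkLabels hp.of_cons⟩
    have hu : u = _ := l.inj h.symm h' (by rw [← l.symm _ _ h, heq])
    have hnot := ((Walk.cons_isPath_iff _ _).1 hp).2
    rw [hu] at hnot
    exact hnot (by simp)

section Tree

variable (hT : T.IsTree) (r : V)

noncomputable def treePath (v : V) : T.Walk r v :=
  (hT.existsUnique_path r v).exists.choose

lemma isPath_treePath (v : V) : (treePath hT r v).IsPath :=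
  (hT.existsUnique_path r v).exists.choose_spec

lemma eq_treePath {v : V} {p : T.Walk r v} (hp : p.IsPath) : p = treePath hT r v :=
  (hT.existsUnique_path r v).unique hp (isPath_treePath hT r v)

noncomputable def wordOf (v : V) : List (Fin d) :=
  l.walkLabels (treePath hT r v)

lemma follow_wordOf (v : V) : l.follow r (l.wordOf hT r v) = v :=
  l.follow_walkLabels _

lemma isChain_wordOf (v : V) : (l.wordOf hT r v).IsChain (· ≠ ·) :=
  l.isChain_walkLabels (isPath_treePath hT r v)

lemma wordOf_eq_or_eq_of_adj {u v : V} (h : T.Adj u v) :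
    l.wordOf hT r v = l.wordOf hT r u ++ [l.label u v] ∨
      l.wordOf hT r u = l.wordOf hT r v ++ [l.label v u] := by
  classical
  set p := treePath hT r u
  have hp : p.IsPath := isPath_treePath hT r u
  by_cases hv : v ∈ p.support
  · right
    have hdrop : p.dropUntil v hv = .cons h.symm .nil :=
      (hT.existsUnique_path v u).unique (hp.dropUntil hv) (.cons .nil (by simpa using h.ne'))
    change l.walkLabels p = _
    rw [← p.take_spec hv, walkLabels_append, hdrop, wordOf,
      ← eq_treePath hT r (hp.takeUntil hv)]
    rfl
  · left
    rw [wordOf, ← eq_treePath hT r (hp.concat hv h), walkLabels_concat]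
    rfl

lemma adj_of_wordOf_eq {u v : V} {c : Fin d} (h : l.wordOf hT r v = l.wordOf hT r u ++ [c]) :
    T.Adj u v ∧ l.label u v = c := by
  have hv : l.nbr u c = v := by
    rw [← l.follow_wordOf hT r v, h, follow_append_singleton, follow_wordOf]
  exact hv ▸ ⟨l.adj_nbr u c, l.label_nbr u c⟩

lemma wordOf_follow {w : List (Fin d)} (hw : w.IsChain (· ≠ ·)) :
    l.wordOf hT r (l.follow r w) = w := by
  induction w using List.reverseRecOn with
  | nil =>
    rw [follow_nil, wordOf, ← eq_treePath hT r .nil]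
    rfl
  | append_singleton w c ih =>
    have ih := ih (List.isChain_append.1 hw).1
    rw [follow_append_singleton]
    have hadj := l.adj_nbr (l.follow r w) c
    rcases l.wordOf_eq_or_eq_of_adj hT r hadj with h | h
    · rw [h, ih, label_nbr]
    · rw [ih, ← l.symm _ _ hadj, label_nbr] at h
      rw [h, List.append_assoc] at hw
      simp [List.isChain_append] at hw

end Tree

end LegalLabelling

lemma inU_one {V : Type*} {T : SimpleGraph V} {d : ℕ} (l : LegalLabelling T d)
    (F : Subgroup (Equiv.Perm (Fin d))) : InU T l F 1 :=
  ⟨fun _ _ => Iff.rfl, fun _ => ⟨1, F.one_mem, fun _ _ => rfl⟩⟩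

section UniversalGroup

variable {V : Type*} {T : SimpleGraph V} {d : ℕ} {l : LegalLabelling T d}
  {F : Subgroup (Equiv.Perm (Fin d))}

-- The local permutations of `g` and `h` at `u` agree at the label of `ux`, hence coincide.
lemma InU.apply_eq_of_adj (hfree : ∀ a ∈ F, ∀ i : Fin d, a i = i → a = 1)
    {g h : Equiv.Perm V} (hg : InU T l F g) (hh : InU T l F h) {u x w : V} (hux : T.Adj u x)
    (hu : g u = h u) (hx : g x = h x) (huw : T.Adj u w) : g w = h w := by
  obtain ⟨a, haF, ha⟩ := hg.2 u
  obtain ⟨b, hbF, hb⟩ := hh.2 u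
  have hab : a = b := by
    have hfix : (b⁻¹ * a) (l.label u x) = l.label u x := by
      rw [Equiv.Perm.mul_apply, Equiv.Perm.inv_eq_iff_eq, ← ha x hux, hu, hx, hb x hux]
    have := hfree _ (F.mul_mem (F.inv_mem hbF) haF) _ hfix
    exact (inv_mul_eq_one.1 this).symm
  refine l.inj (hu ▸ (hg.1 u w).2 huw) ((hh.1 u w).2 huw) ?_
  rw [← hu, ha w huw, hab, hu, hb w huw]

lemma InU.eq_of_eq_of_adj (hconn : T.Connected)
    (hfree : ∀ a ∈ F, ∀ i : Fin d, a i = i → a = 1)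
    {g h : Equiv.Perm V} (hg : InU T l F g) (hh : InU T l F h) {u x : V} (hux : T.Adj u x)
    (hu : g u = h u) (hx : g x = h x) : g = h := by
  suffices ∀ {u v : V} (p : T.Walk u v) {x : V},
      T.Adj u x → g u = h u → g x = h x → g v = h v by
    ext v
    exact this (hconn.preconnected u v).some hux hu hx
  intro u v p
  induction p with
  | nil => exact fun _ hu _ => hu
  | cons huw _ ih =>
    exact fun hux hu hx => ih huw.symm (hg.apply_eq_of_adj hfree hh hux hu hx huw) hu

-- `τ w` is the local permutation at the vertex with coordinates `w`; `hτ` makes it also correct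
-- on the edge to the parent.
lemma inU_of_wordOf_apply (hT : T.IsTree) (r : V) {g : Equiv.Perm V}
    (Φ : List (Fin d) → List (Fin d)) (τ : List (Fin d) → Equiv.Perm (Fin d))
    (hτF : ∀ w, τ w ∈ F) (hΦ : ∀ w c, Φ (w ++ [c]) = Φ w ++ [τ w c])
    (hτ : ∀ w c, τ (w ++ [c]) c = τ w c)
    (hg : ∀ v, l.wordOf hT r (g v) = Φ (l.wordOf hT r v)) :
    InU T l F g := by
  have hedge {u v : V} {c : Fin d} (h : l.wordOf hT r v = l.wordOf hT r u ++ [c]) :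
      T.Adj (g u) (g v) ∧ l.label (g u) (g v) = τ (l.wordOf hT r u) c :=
    l.adj_of_wordOf_eq hT r (by rw [hg, hg, h, hΦ])
  refine ⟨hT.isTreeAut_of_adj fun u v huv => ?_,
    fun x => ⟨τ (l.wordOf hT r x), hτF _, fun w hxw => ?_⟩⟩
  · rcases l.wordOf_eq_or_eq_of_adj hT r huv with h | h
    · exact (hedge h).1
    · exact (hedge h).1.symm
  · rcases l.wordOf_eq_or_eq_of_adj hT r hxw with h | h
    · exact (hedge h).2
    · obtain ⟨hadj, hlabel⟩ := hedge h
      rw [← l.symm _ _ hadj, hlabel, h, l.symm _ _ hxw, hτ]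

end UniversalGroup

section Twist

variable {α : Type*} [DecidableEq α] (p : List α) (a : Equiv.Perm α)

def twist (w : List α) : List α :=
  if p <+: w then p ++ (w.drop p.length).map a else w

def twistFactor (w : List α) : Equiv.Perm α :=
  if p <+: w then a else 1

variable {p a}

lemma twist_of_length_le {w : List α} (h : w.length ≤ p.length) : twist p a w = w := by
  by_cases hw : p <+: w
  · obtain rfl := hw.eq_of_length (le_antisymm hw.length_le h)
    simp [twist]
  · simp [twist, hw]

lemma twist_append_singleton (w : List α) (c : α) :
    twist p a (w ++ [c]) = twist p a w ++ [twistFactor p a w c] := by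
  by_cases hw : p <+: w
  · obtain ⟨t, rfl⟩ := hw
    simp [twist, twistFactor]
  · by_cases hwc : p <+: w ++ [c]
    · obtain rfl := (List.prefix_concat_iff.1 hwc).resolve_right hw
      simp [twist, twistFactor, hw]
    · simp [twist, twistFactor, hw, hwc]

lemma twistFactor_append_singleton_apply {i : α} (hp : p.getLast? = some i) (hai : a i = i)
    (w : List α) (c : α) : twistFactor p a (w ++ [c]) c = twistFactor p a w c := by
  by_cases hw : p <+: w
  · simp [twistFactor, hw, hw.trans (List.prefix_append w [c])]
  · by_cases hwc : p <+: w ++ [c]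
    · obtain rfl := (List.prefix_concat_iff.1 hwc).resolve_right hw
      simp_all [twistFactor]
    · simp [twistFactor, hw, hwc]

lemma twist_inv_twist (w : List α) : twist p a⁻¹ (twist p a w) = w := by
  by_cases hw : p <+: w
  · obtain ⟨t, rfl⟩ := hw
    simp [twist, List.map_map]
  · simp [twist, hw]

lemma isChain_twist {i : α} (hp : p.getLast? = some i) (hai : a i = i) {w : List α}
    (hw : w.IsChain (· ≠ ·)) : (twist p a w).IsChain (· ≠ ·) := by
  by_cases hpw : p <+: w
  · obtain ⟨t, rfl⟩ := hpw
    obtain ⟨hpc, htc, hjoin⟩ := List.isChain_append.1 hw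
    simp only [twist, List.prefix_append, if_true, List.drop_left]
    refine List.isChain_append.2 ⟨hpc, (List.isChain_map a).2 (htc.imp fun _ _ h => ?_), ?_⟩
    · exact a.injective.ne h
    · rintro x hx _ hy
      rw [hp, Option.mem_some_iff] at hx
      subst hx
      rw [List.head?_map, Option.mem_map] at hy
      obtain ⟨y, hy, rfl⟩ := hy
      rw [← hai]
      exact a.injective.ne (hjoin _ hp y hy)
  · simpa [twist, hpw] using hw

end Twist

section Alternating

variable {α : Type*}

def alternating (i j : α) : ℕ → List α
  | 0 => [i]
  | n + 1 => alternating j i n ++ [i]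

lemma length_alternating (i j : α) (n : ℕ) : (alternating i j n).length = n + 1 := by
  induction n generalizing i j <;> simp [alternating, *]

lemma getLast?_alternating (i j : α) (n : ℕ) : (alternating i j n).getLast? = some i := by
  cases n <;> simp [alternating]

lemma isChain_alternating {i j : α} (hij : i ≠ j) (n : ℕ) :
    (alternating i j n).IsChain (· ≠ ·) := by
  induction n generalizing i j with
  | zero => exact List.isChain_singleton i
  | succ n ih =>
    refine List.isChain_append.2 ⟨ih hij.symm, List.isChain_singleton i, ?_⟩
    simpa [getLast?_alternating] using hij.symm

end Alternating

namespace LegalLabelling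

variable {V : Type*} {T : SimpleGraph V} {d : ℕ} (l : LegalLabelling T d) (hT : T.IsTree) (r : V)
  {p : List (Fin d)} {i : Fin d} {a : Equiv.Perm (Fin d)}

lemma follow_twist_inv_wordOf_follow_twist (hp : p.getLast? = some i) (hai : a i = i) (v : V) :
    l.follow r (twist p a⁻¹ (l.wordOf hT r (l.follow r (twist p a (l.wordOf hT r v))))) = v := by
  rw [l.wordOf_follow hT r (isChain_twist hp hai (l.isChain_wordOf hT r v)), twist_inv_twist,
    follow_wordOf]

/-- The automorphism fixing everything outside the subtree below the vertex with coordinates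
`p`, and rotating that subtree by `a` at each of its vertices. -/
noncomputable def twistPerm (hp : p.getLast? = some i) (hai : a i = i) : Equiv.Perm V where
  toFun v := l.follow r (twist p a (l.wordOf hT r v))
  invFun v := l.follow r (twist p a⁻¹ (l.wordOf hT r v))
  left_inv := l.follow_twist_inv_wordOf_follow_twist hT r hp hai
  right_inv v := by
    simpa using l.follow_twist_inv_wordOf_follow_twist hT r hp (a := a⁻¹)
      (Equiv.Perm.inv_eq_iff_eq.2 hai.symm) v

variable (hp : p.getLast? = some i) (hai : a i = i)

lemma wordOf_twistPerm (v : V) :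
    l.wordOf hT r (l.twistPerm hT r hp hai v) = twist p a (l.wordOf hT r v) :=
  l.wordOf_follow hT r (isChain_twist hp hai (l.isChain_wordOf hT r v))

lemma inU_twistPerm {F : Subgroup (Equiv.Perm (Fin d))} (haF : a ∈ F) :
    InU T l F (l.twistPerm hT r hp hai) := by
  refine inU_of_wordOf_apply hT r (twist p a) (twistFactor p a) (fun w => ?_)
    twist_append_singleton (twistFactor_append_singleton_apply hp hai)
    (l.wordOf_twistPerm hT r hp hai)
  unfold twistFactor
  split_ifs
  exacts [haF, F.one_mem]

lemma twistPerm_apply_of_length_le {v : V} (hv : (l.wordOf hT r v).length ≤ p.length) :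
    l.twistPerm hT r hp hai v = v := by
  change l.follow r _ = v
  rw [twist_of_length_le hv, follow_wordOf]

lemma twistPerm_apply_ne {c : Fin d} (hpc : (p ++ [c]).IsChain (· ≠ ·)) (hc : a c ≠ c) :
    l.twistPerm hT r hp hai (l.follow r (p ++ [c])) ≠ l.follow r (p ++ [c]) := by
  intro h
  have hw := congrArg (l.wordOf hT r) h
  rw [wordOf_twistPerm, l.wordOf_follow hT r hpc, twist_append_singleton,
    twist_of_length_le le_rfl] at hw
  simp [twistFactor, hc] at hw

end LegalLabelling

lemma exists_inU_ne_one_fixing {V : Type*} {T : SimpleGraph V} {d : ℕ}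
    [Nontrivial (Fin d)] (hT : T.IsTree) (l : LegalLabelling T d)
    {F : Subgroup (Equiv.Perm (Fin d))} {a : Equiv.Perm (Fin d)} (haF : a ∈ F) {i : Fin d}
    (hai : a i = i) (ha : a ≠ 1) {I : Set V} (hI : I.Finite) :
    ∃ g, InU T l F g ∧ (∀ v ∈ I, g v = v) ∧ g ≠ 1 := by
  obtain ⟨r⟩ := hT.connected.nonempty
  obtain ⟨c, hc⟩ : ∃ c, a c ≠ c := by
    by_contra! h
    exact ha (Equiv.ext h)
  obtain ⟨j, hji⟩ := exists_ne i
  obtain ⟨N, hN⟩ := (hI.image fun v => (l.wordOf hT r v).length).bddAbove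
  let p := alternating i j N
  have hp := getLast?_alternating i j N
  have hpc : (p ++ [c]).IsChain (· ≠ ·) := by
    refine List.isChain_append.2 ⟨isChain_alternating hji.symm N, List.isChain_singleton c, ?_⟩
    rintro _ hx _ ⟨⟩
    rw [hp, Option.mem_some_iff] at hx
    exact hx ▸ fun hic => hc (hic ▸ hai)
  refine ⟨l.twistPerm hT r hp hai, l.inU_twistPerm hT r hp hai haF, fun v hv => ?_,
    fun h => l.twistPerm_apply_ne hT r hp hai hpc hc (by rw [h]; rfl)⟩
  apply l.twistPerm_apply_of_length_le
  rw [length_alternating]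
  exact (hN ⟨v, hv, rfl⟩).trans N.le_succ

/-- U^{(l)}(F) is discrete iff the action of F on {1,…,d} is free. -/
theorem universal_group_discrete_iff {V : Type*} (T : SimpleGraph V)
    (hT : T.IsTree) (d : ℕ) (hd : 3 ≤ d) (l : LegalLabelling T d)
    (F : Subgroup (Equiv.Perm (Fin d))) :
    (@DiscreteTopology {g : Equiv.Perm V // InU T l F g}
        (TopologicalSpace.induced Subtype.val (permTop V))) ↔
    (∀ a ∈ F, ∀ i : Fin d, a i = i → a = 1) := by
  rw [discreteTopology_subtype_permTop_iff]
  constructor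
  · intro hdisc a haF i hai
    by_contra ha
    obtain ⟨I, hI, hI1⟩ := hdisc 1 (inU_one l F)
    have : Nontrivial (Fin d) := Fin.nontrivial_iff_two_le.2 (by omega)
    obtain ⟨g, hg, hgI, hg1⟩ := exists_inU_ne_one_fixing hT l haF hai ha hI
    exact hg1 (hI1 g hg hgI)
  · intro hfree g hg
    obtain ⟨r⟩ := hT.connected.nonempty
    let x := l.nbr r ⟨0, by omega⟩
    refine ⟨{r, x}, Set.toFinite _, fun h hh hagree => ?_⟩
    exact hh.eq_of_eq_of_adj hT.connected hfree hg (l.adj_nbr r _) (hagree r (by simp))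
      (hagree x (by simp))
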